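/- Let A and B be nonempty finite types, each with a distinguished element 0, and write e₀ for the standard basis vector of ℂ^{A×B} at index (0,0). Let U and V be unitary matrices on ℂ^{A×B} such that U·e₀ = φ ⊗ φ' and V·e₀ = ψ ⊗ ψ' for unit vectors φ, ψ ∈ ℂ^A and φ', ψ' ∈ ℂ^B. Let SWAP_{BB'} be the permutation unitary on ℂ^{(A×B)×(A×B)} sending the basis vector at index ((a,b),(a',b')) to ((a,b'),(a',b)), and set W = (V† ⊗ I_{A×B}) · SWAP_{BB'} · (U ⊗ V). Then ∑_{(a',b') ∈ A×B} |(W(e₀ ⊗ e₀))((0,0),(a',b'))|² = |⟨ψ, φ⟩|², where ⟨ψ, φ⟩ = ∑_{a∈A} conj(ψ(a))·φ(a); i.e., for pure input states the encoded amplitude squared equals the squared fidelity |⟨φ|ψ⟩|² between the pure states φ and ψ. -/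

import Mathlib

open Matrix Kronecker Finset

noncomputable section

/-- Kronecker (tensor) product of two vectors. -/
def vecKron {I J : Type*} (x : I → ℂ) (y : J → ℂ) : I × J → ℂ := fun p => x p.1 * y p.2

/-- The permutation unitary `SWAP_{BB'}` on `ℂ^{(A×B)×(A×B)}`, sending the basis vector at
index `((a,b),(a',b'))` to the basis vector at index `((a,b'),(a',b))`. -/
def swapBB (A B : Type*) [DecidableEq A] [DecidableEq B] :
    Matrix ((A × B) × (A × B)) ((A × B) × (A × B)) ℂ :=
  Matrix.of fun i j => if i = ((j.1.1, j.2.2), (j.2.1, j.1.2)) then 1 else 0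

/-!
`U ⊗ V` sends `e₀ ⊗ e₀` to `(φ ⊗ φ') ⊗ (ψ ⊗ ψ')`, and the swap turns this into
`(φ ⊗ ψ') ⊗ (ψ ⊗ φ')`. Applying `V† ⊗ I` and reading the first factor at `(0,0)` gives
`⟨V e₀, φ ⊗ ψ'⟩ = ⟨ψ ⊗ ψ', φ ⊗ ψ'⟩ = ⟨ψ, φ⟩ ⟨ψ', ψ'⟩ = ⟨ψ, φ⟩`, so the `(0,0)`-slice of the output
is `⟨ψ, φ⟩ · (ψ ⊗ φ')`, whose squared norm is `|⟨ψ, φ⟩|²`.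
-/

section VecKron

variable {I J K L : Type*}

@[simp]
lemma vecKron_apply (x : I → ℂ) (y : J → ℂ) (p : I × J) : vecKron x y p = x p.1 * y p.2 := rfl

lemma star_vecKron (x : I → ℂ) (y : J → ℂ) : star (vecKron x y) = vecKron (star x) (star y) := by
  funext p
  simp

lemma dotProduct_vecKron [Fintype I] [Fintype J] (x x' : I → ℂ) (y y' : J → ℂ) :
    vecKron x y ⬝ᵥ vecKron x' y' = (x ⬝ᵥ x') * (y ⬝ᵥ y') := by
  simp only [dotProduct, Fintype.sum_prod_type, vecKron_apply, sum_mul_sum]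
  refine sum_congr rfl fun i _ => sum_congr rfl fun j _ => ?_
  ring

lemma kronecker_mulVec_vecKron [Fintype K] [Fintype L]
    (M : Matrix I K ℂ) (N : Matrix J L ℂ) (x : K → ℂ) (y : L → ℂ) :
    (M ⊗ₖ N) *ᵥ vecKron x y = vecKron (M *ᵥ x) (N *ᵥ y) := by
  funext ⟨i, j⟩
  exact dotProduct_vecKron _ _ _ _

lemma sum_norm_sq_vecKron [Fintype I] [Fintype J] (x : I → ℂ) (y : J → ℂ) :
    ∑ p, ‖vecKron x y p‖ ^ 2 = (∑ i, ‖x i‖ ^ 2) * ∑ j, ‖y j‖ ^ 2 := by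
  simp only [Fintype.sum_prod_type, vecKron_apply, norm_mul, mul_pow, sum_mul_sum]

end VecKron

lemma star_dotProduct_self_eq_one {𝕜 I : Type*} [RCLike 𝕜] [Fintype I] {x : I → 𝕜}
    (hx : ∑ i, ‖x i‖ ^ 2 = 1) : star x ⬝ᵥ x = 1 := by
  simp only [dotProduct, Pi.star_apply, RCLike.star_def, RCLike.conj_mul]
  exact_mod_cast hx

lemma swapBB_mulVec_apply {A B : Type*} [Fintype A] [Fintype B] [DecidableEq A] [DecidableEq B]
    (z : (A × B) × (A × B) → ℂ) (a a' : A) (b b' : B) :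
    (swapBB A B *ᵥ z) ((a, b), (a', b')) = z ((a, b'), (a', b)) := by
  simp only [swapBB, mulVec, dotProduct, of_apply]
  rw [sum_eq_single ((a, b'), (a', b))]
  · simp
  · rintro ⟨⟨ja, jb⟩, ja', jb'⟩ _ hj
    rw [if_neg, zero_mul]
    simp only [Prod.mk.injEq]
    rintro ⟨⟨rfl, rfl⟩, rfl, rfl⟩
    exact hj rfl
  · exact fun h => absurd (mem_univ _) h

lemma swapBB_mulVec_vecKron {A B : Type*} [Fintype A] [Fintype B] [DecidableEq A] [DecidableEq B]
    (φ ψ : A → ℂ) (φ' ψ' : B → ℂ) :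
    swapBB A B *ᵥ vecKron (vecKron φ φ') (vecKron ψ ψ') = vecKron (vecKron φ ψ') (vecKron ψ φ') := by
  funext ⟨⟨a, b⟩, a', b'⟩
  rw [swapBB_mulVec_apply]
  simp only [vecKron_apply]
  ring

theorem stmt12_general {A B : Type*} [Fintype A] [Fintype B] [DecidableEq A] [DecidableEq B]
    [Zero A] [Zero B]
    (U V : Matrix (A × B) (A × B) ℂ)
    (φ ψ : A → ℂ) (φ' ψ' : B → ℂ)
    (hψ : ∑ a, ‖ψ a‖ ^ 2 = 1)
    (hφ' : ∑ b, ‖φ' b‖ ^ 2 = 1) (hψ' : ∑ b, ‖ψ' b‖ ^ 2 = 1)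
    (e0 : A × B → ℂ) (he0 : e0 = fun p => if p = ((0 : A), (0 : B)) then 1 else 0)
    (hUe0 : U *ᵥ e0 = vecKron φ φ') (hVe0 : V *ᵥ e0 = vecKron ψ ψ')
    (W : Matrix ((A × B) × (A × B)) ((A × B) × (A × B)) ℂ)
    (hW : W = (Vᴴ ⊗ₖ (1 : Matrix (A × B) (A × B) ℂ)) * swapBB A B * (U ⊗ₖ V)) :
    (∑ p : A × B, ‖(W *ᵥ vecKron e0 e0) ((((0 : A), (0 : B))), p)‖ ^ 2)
      = ‖∑ a, star (ψ a) * φ a‖ ^ 2 := by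
  have hcol : V.col ((0 : A), (0 : B)) = vecKron ψ ψ' := by
    have he0' : e0 = Pi.single ((0 : A), (0 : B)) 1 := by
      funext p
      simp [he0, Pi.single_apply]
    simpa [he0', mulVec_single] using hVe0
  have hWe : W *ᵥ vecKron e0 e0 = vecKron (Vᴴ *ᵥ vecKron φ ψ') (vecKron ψ φ') := by
    rw [hW, ← mulVec_mulVec, ← mulVec_mulVec, kronecker_mulVec_vecKron, hUe0, hVe0,
      swapBB_mulVec_vecKron, kronecker_mulVec_vecKron, one_mulVec]
  have hamp : (Vᴴ *ᵥ vecKron φ ψ') ((0 : A), (0 : B)) = ∑ a, star (ψ a) * φ a := by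
    change star (V.col ((0 : A), (0 : B))) ⬝ᵥ vecKron φ ψ' = _
    rw [hcol, star_vecKron, dotProduct_vecKron, star_dotProduct_self_eq_one hψ', mul_one]
    rfl
  calc (∑ p : A × B, ‖(W *ᵥ vecKron e0 e0) ((((0 : A), (0 : B))), p)‖ ^ 2)
      = ‖∑ a, star (ψ a) * φ a‖ ^ 2 * ∑ p, ‖vecKron ψ φ' p‖ ^ 2 := by
        simp only [hWe, vecKron_apply (Vᴴ *ᵥ _), hamp, norm_mul, mul_pow, mul_sum]
    _ = ‖∑ a, star (ψ a) * φ a‖ ^ 2 := by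
        rw [sum_norm_sq_vecKron, hψ, hφ', mul_one, mul_one]

theorem stmt12 {A B : Type*} [Fintype A] [Fintype B] [DecidableEq A] [DecidableEq B]
    [Zero A] [Zero B]
    (U V : Matrix (A × B) (A × B) ℂ)
    (hU : U ∈ Matrix.unitaryGroup (A × B) ℂ) (hV : V ∈ Matrix.unitaryGroup (A × B) ℂ)
    (φ ψ : A → ℂ) (φ' ψ' : B → ℂ)
    (hφ : ∑ a, ‖φ a‖ ^ 2 = 1) (hψ : ∑ a, ‖ψ a‖ ^ 2 = 1)
    (hφ' : ∑ b, ‖φ' b‖ ^ 2 = 1) (hψ' : ∑ b, ‖ψ' b‖ ^ 2 = 1)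
    (e0 : A × B → ℂ) (he0 : e0 = fun p => if p = ((0 : A), (0 : B)) then 1 else 0)
    (hUe0 : U *ᵥ e0 = vecKron φ φ') (hVe0 : V *ᵥ e0 = vecKron ψ ψ')
    (W : Matrix ((A × B) × (A × B)) ((A × B) × (A × B)) ℂ)
    (hW : W = (Vᴴ ⊗ₖ (1 : Matrix (A × B) (A × B) ℂ)) * swapBB A B * (U ⊗ₖ V)) :
    (∑ p : A × B, ‖(W *ᵥ vecKron e0 e0) ((((0 : A), (0 : B))), p)‖ ^ 2)
      = ‖∑ a, star (ψ a) * φ a‖ ^ 2 :=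
  stmt12_general U V φ ψ φ' ψ' hψ hφ' hψ' e0 he0 hUe0 hVe0 W hW

end
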